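/- arXiv:math/0210418 — 3 statements merged into one kernel-verified Lean document; each statement's English description precedes it below -/
import Mathlib

section
/- Let V be a 4-dimensional oriented real inner product space, J a compatible orthogonal complex structure with fundamental form ω. If φ and ψ are self-dual conformal transformations of V with φ*ω = ψ*ω and φ*g = ψ*g (equal conformal factors and equal pullback forms), and both are nonzero, then ψ = e^{iθ}·φ for some angle θ, where e^{iθ} acts via the complex structure: ψ = (cos θ)φ + (sin θ)(J∘φ). -/
open scoped RealInnerProductSpace


def IsSDConfWith {V : Type} [NormedAddCommGroup V] [InnerProductSpace ℝ V]
    (o : Orientation ℝ V (Fin 4)) (φ : V →ₗ[ℝ] V) (r θ : ℝ) : Prop :=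
  0 ≤ r ∧ ∃ b : OrthonormalBasis (Fin 4) ℝ V,
    b.toBasis.orientation = o ∧
    φ (b 0) = r • (Real.cos θ • b 0 + Real.sin θ • b 1) ∧
    φ (b 1) = r • (-Real.sin θ • b 0 + Real.cos θ • b 1) ∧
    φ (b 2) = r • (Real.cos θ • b 2 + Real.sin θ • b 3) ∧
    φ (b 3) = r • (-Real.sin θ • b 2 + Real.cos θ • b 3)

def IsSDConf {V : Type} [NormedAddCommGroup V] [InnerProductSpace ℝ V]
    (o : Orientation ℝ V (Fin 4)) (φ : V →ₗ[ℝ] V) : Prop :=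
  ∃ r θ : ℝ, IsSDConfWith o φ r θ

/-- An orthogonal complex structure compatible with the orientation: `J² = -1`, `J` is
orthogonal, and some complex orthonormal basis `e, Je, f, Jf` is positively oriented. -/
def IsCompatibleCplx {V : Type} [NormedAddCommGroup V] [InnerProductSpace ℝ V]
    (o : Orientation ℝ V (Fin 4)) (J : V →ₗ[ℝ] V) : Prop :=
  (J ∘ₗ J = -LinearMap.id) ∧ (∀ v w : V, ⟪J v, J w⟫ = ⟪v, w⟫) ∧
    ∃ b : OrthonormalBasis (Fin 4) ℝ V,
      b.toBasis.orientation = o ∧ J (b 0) = b 1 ∧ J (b 2) = b 3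

abbrev M4 := Matrix (Fin 4) (Fin 4) ℝ

theorem my_det_fin_four (A : Matrix (Fin 4) (Fin 4) ℝ) :
    A.det = A 0 0 * A 1 1 * A 2 2 * A 3 3 - A 0 0 * A 1 1 * A 2 3 * A 3 2 - A 0 0 * A 1 2 * A 2 1 * A 3 3 + A 0 0 * A 1 2 * A 2 3 * A 3 1 + A 0 0 * A 1 3 * A 2 1 * A 3 2 - A 0 0 * A 1 3 * A 2 2 * A 3 1 - A 0 1 * A 1 0 * A 2 2 * A 3 3 + A 0 1 * A 1 0 * A 2 3 * A 3 2 + A 0 1 * A 1 2 * A 2 0 * A 3 3 - A 0 1 * A 1 2 * A 2 3 * A 3 0 - A 0 1 * A 1 3 * A 2 0 * A 3 2 + A 0 1 * A 1 3 * A 2 2 * A 3 0 + A 0 2 * A 1 0 * A 2 1 * A 3 3 - A 0 2 * A 1 0 * A 2 3 * A 3 1 - A 0 2 * A 1 1 * A 2 0 * A 3 3 + A 0 2 * A 1 1 * A 2 3 * A 3 0 + A 0 2 * A 1 3 * A 2 0 * A 3 1 - A 0 2 * A 1 3 * A 2 1 * A 3 0 - A 0 3 * A 1 0 * A 2 1 *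 A 3 2 + A 0 3 * A 1 0 * A 2 2 * A 3 1 + A 0 3 * A 1 1 * A 2 0 * A 3 2 - A 0 3 * A 1 1 * A 2 2 * A 3 0 - A 0 3 * A 1 2 * A 2 0 * A 3 1 + A 0 3 * A 1 2 * A 2 1 * A 3 0 := by
  rw [Matrix.det_succ_row_zero]
  simp [Fin.sum_univ_succ, Matrix.det_fin_three, Matrix.submatrix_apply, Fin.succAbove]
  ring


def Lq (a b c d : ℝ) : M4 :=
  !![a,-b,-c,-d; b,a,-d,c; c,d,a,-b; d,-c,b,a]

lemma Lq_mul (a b c d a2 b2 c2 d2 : ℝ) :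
    Lq a b c d * Lq a2 b2 c2 d2 =
      Lq (a*a2 - b*b2 - c*c2 - d*d2) (a*b2 + b*a2 + c*d2 - d*c2)
        (a*c2 - b*d2 + c*a2 + d*b2) (a*d2 + b*c2 - c*b2 + d*a2) := by
  ext i j
  fin_cases i <;> fin_cases j <;>
    simp [Lq, Matrix.mul_apply, Fin.sum_univ_four] <;> ring

lemma Lq_transpose (a b c d : ℝ) : Matrix.transpose (Lq a b c d) = Lq a (-b) (-c) (-d) := by
  ext i j
  fin_cases i <;> fin_cases j <;> simp [Lq]

lemma Lq_smul_add (x y a b c d a2 b2 c2 d2 : ℝ) :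
    x • Lq a b c d + y • Lq a2 b2 c2 d2 =
      Lq (x*a + y*a2) (x*b + y*b2) (x*c + y*c2) (x*d + y*d2) := by
  ext i j
  fin_cases i <;> fin_cases j <;> simp [Lq] <;> ring

lemma Lq_one : Lq 1 0 0 0 = 1 := by
  ext i j
  fin_cases i <;> fin_cases j <;> simp [Lq, Matrix.one_apply, Matrix.vecHead, Matrix.vecTail]

lemma Lq_neg_one : Lq (-1) 0 0 0 = -1 := by
  ext i j
  fin_cases i <;> fin_cases j <;>
    simp [Lq, Matrix.one_apply, Matrix.neg_apply, Matrix.vecHead, Matrix.vecTail]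

theorem core (T : M4) (hT : Matrix.transpose T * T = 1) (hdet : T.det = 1) :
    ∃ x y z : ℝ, x^2 + y^2 + z^2 = 1 ∧
      T * Lq 0 1 0 0 * Matrix.transpose T = Lq 0 x y z := by
  have hTT : T * Matrix.transpose T = 1 := mul_eq_one_comm.mp hT
  have hE2 : Lq 0 1 0 0 * Lq 0 1 0 0 = -1 := by
    have h : Lq 0 1 0 0 * Lq 0 1 0 0 = Lq (-1) 0 0 0 := by
      ext i j; fin_cases i <;> fin_cases j <;>
        simp [Lq, Matrix.mul_apply, Fin.sum_univ_four, Matrix.vecHead, Matrix.vecTail]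
    rw [h, Lq_neg_one]
  set K := T * Lq 0 1 0 0 * Matrix.transpose T with hKdef
  have hK2 : K * K = -1 := by
    calc K * K = T * (Lq 0 1 0 0 * ((Matrix.transpose T * T) * (Lq 0 1 0 0 * Matrix.transpose T))) := by
          simp only [hKdef, mul_assoc]
    _ = T * ((Lq 0 1 0 0 * Lq 0 1 0 0) * Matrix.transpose T) := by
          rw [hT, one_mul, mul_assoc]
    _ = -1 := by rw [hE2, neg_one_mul, mul_neg, hTT]
  have hE1t : Matrix.transpose (Lq 0 1 0 0) = - Lq 0 1 0 0 := by
    ext i j; fin_cases i <;> fin_cases j <;>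
      simp [Lq, Matrix.neg_apply, Matrix.vecHead, Matrix.vecTail]
  have hsk : ∀ i j, K j i = - K i j := by
    intro i j
    have h : Matrix.transpose K = -K := by
      calc Matrix.transpose K
          = T * (Matrix.transpose (Lq 0 1 0 0) * Matrix.transpose T) := by
            simp [hKdef, Matrix.transpose_mul, mul_assoc]
        _ = -K := by rw [hE1t, neg_mul, mul_neg, hKdef, mul_assoc]
    have := congrArg (fun X : M4 => X i j) h
    simpa using this
  have hKT : K * T = T * Lq 0 1 0 0 := by
    calc K * T = T * Lq 0 1 0 0 * (Matrix.transpose T * T) := by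
          simp only [hKdef, mul_assoc]
    _ = T * Lq 0 1 0 0 := by rw [hT, mul_one]
  set a := K 1 0 with ha
  set b := K 2 0 with hb
  set c := K 3 0 with hc
  set d := K 2 1 with hd
  set e := K 3 1 with he
  set f := K 3 2 with hf
  have hKd : K = !![0,-a,-b,-c; a,0,-d,-e; b,d,0,-f; c,e,f,0] := by
    ext i j
    fin_cases i <;> fin_cases j <;>
      simp [Matrix.vecHead, Matrix.vecTail] <;>
      first
        | (rw [ha]; rw [hsk 1 0])
        | (rw [hb]; rw [hsk 2 0])
        | (rw [hc]; rw [hsk 3 0])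
        | (rw [hd]; rw [hsk 2 1])
        | (rw [he]; rw [hsk 3 1])
        | (rw [hf]; rw [hsk 3 2])
        | (have h0 := hsk 0 0; linarith)
        | (have h0 := hsk 1 1; linarith)
        | (have h0 := hsk 2 2; linarith)
        | (have h0 := hsk 3 3; linarith)
  rw [hKd] at hK2 hKT
  have h00 := congrArg (fun X : M4 => X 0 0) hK2
  have h11 := congrArg (fun X : M4 => X 1 1) hK2
  have h22 := congrArg (fun X : M4 => X 2 2) hK2
  have h33 := congrArg (fun X : M4 => X 3 3) hK2
  have h10 := congrArg (fun X : M4 => X 1 0) hK2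
  have h20 := congrArg (fun X : M4 => X 2 0) hK2
  have h30 := congrArg (fun X : M4 => X 3 0) hK2
  have h21 := congrArg (fun X : M4 => X 2 1) hK2
  have h31 := congrArg (fun X : M4 => X 3 1) hK2
  have h32 := congrArg (fun X : M4 => X 3 2) hK2
  simp [Matrix.mul_apply, Fin.sum_univ_four, Matrix.vecHead, Matrix.vecTail,
    Matrix.one_apply, Matrix.neg_apply] at h00 h11 h22 h33 h10 h20 h30 h21 h31 h32
  have P11 : (a+f)*(a-f) = 0 := by linear_combination (-(1:ℝ)/2)*h00 + (1/2)*h33 - (1/2)*h11 + (1/2)*h22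
  have P12 : (a+f)*(b+e) = 0 := by linear_combination -h21 + h30
  have P13 : (a+f)*(c-d) = 0 := by linear_combination -h31 - h20
  have P21 : (b-e)*(a-f) = 0 := by linear_combination -h21 - h30
  have P22 : (b-e)*(b+e) = 0 := by linear_combination (-(1:ℝ)/2)*h00 + (1/2)*h33 - (1/2)*h22 + (1/2)*h11
  have P23 : (b-e)*(c-d) = 0 := by linear_combination -h32 + h10
  have P31 : (c+d)*(a-f) = 0 := by linear_combination -h31 + h20
  have P32 : (c+d)*(b+e) = 0 := by linear_combination -h32 - h10
  have P33 : (c+d)*(c-d) = 0 := by linear_combination (-(1:ℝ)/2)*h00 + (1/2)*h11 - (1/2)*h33 + (1/2)*h22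
  by_cases hcase : a - f = 0 ∧ b + e = 0 ∧ c - d = 0
  · refine ⟨a, b, c, by linear_combination -h00, ?_⟩
    rw [hKd]
    ext i j
    fin_cases i <;> fin_cases j <;>
      simp [Lq, Matrix.vecHead, Matrix.vecTail] <;> linarith [hcase.1, hcase.2.1, hcase.2.2]
  · exfalso
    have hx : a + f = 0 ∧ b - e = 0 ∧ c + d = 0 := by
      rcases not_and_or.mp hcase with h | h
      · exact ⟨by rcases mul_eq_zero.mp P11 with h'|h'; exact h'; exact absurd h' h,
          by rcases mul_eq_zero.mp P21 with h'|h'; exact h'; exact absurd h' h,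
          by rcases mul_eq_zero.mp P31 with h'|h'; exact h'; exact absurd h' h⟩
      rcases not_and_or.mp h with h | h
      · exact ⟨by rcases mul_eq_zero.mp P12 with h'|h'; exact h'; exact absurd h' h,
          by rcases mul_eq_zero.mp P22 with h'|h'; exact h'; exact absurd h' h,
          by rcases mul_eq_zero.mp P32 with h'|h'; exact h'; exact absurd h' h⟩
      · exact ⟨by rcases mul_eq_zero.mp P13 with h'|h'; exact h'; exact absurd h' h,
          by rcases mul_eq_zero.mp P23 with h'|h'; exact h'; exact absurd h' h,
          by rcases mul_eq_zero.mp P33 with h'|h'; exact h'; exact absurd h' h⟩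
    have hf' : f = -a := by linarith [hx.1]
    have he' : e = b := by linarith [hx.2.1]
    have hd' : d = -c := by linarith [hx.2.2]
    rw [hf', he', hd'] at hKT
    have hc01 := congrArg (fun X : M4 => X 0 0) hKT
    have hc11 := congrArg (fun X : M4 => X 1 0) hKT
    have hc21 := congrArg (fun X : M4 => X 2 0) hKT
    have hc31 := congrArg (fun X : M4 => X 3 0) hKT
    have hc03 := congrArg (fun X : M4 => X 0 2) hKT
    have hc13 := congrArg (fun X : M4 => X 1 2) hKT
    have hc23 := congrArg (fun X : M4 => X 2 2) hKT
    have hc33 := congrArg (fun X : M4 => X 3 2) hKT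
    have hn0 := congrArg (fun X : M4 => X 0 0) hT
    have hn2 := congrArg (fun X : M4 => X 2 2) hT
    have h02 := congrArg (fun X : M4 => X 0 2) hT
    have h12 := congrArg (fun X : M4 => X 1 2) hT
    simp [Matrix.mul_apply, Fin.sum_univ_four, Matrix.vecHead, Matrix.vecTail,
      Matrix.one_apply, Matrix.neg_apply, Matrix.transpose_apply, Lq] at hc01 hc11 hc21 hc31 hc03 hc13 hc23 hc33 hn0 hn2 h02 h12
    rw [my_det_fin_four] at hdet
    rw [← hc01, ← hc11, ← hc21, ← hc31, ← hc03, ← hc13, ← hc23, ← hc33] at hdet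
    rw [← hc01, ← hc11, ← hc21, ← hc31] at h12
    have key : (1:ℝ) = -1 := by
      linear_combination (-1 : ℝ)*hdet - ((T 0 2 * T 0 2 + T 1 2 * T 1 2 + T 2 2 * T 2 2 + T 3 2 * T 3 2)*(a^2 + b^2 + c^2))*hn0 - (a^2 + b^2 + c^2)*hn2 + h00 + ((a^2 + b^2 + c^2)*(T 0 0 * T 0 2 + T 1 0 * T 1 2 + T 2 0 * T 2 2 + T 3 0 * T 3 2))*h02 + ((-(a * T 1 0) - b * T 2 0 - c * T 3 0) * T 0 2 + (a * T 0 0 + c * T 2 0 - b * T 3 0) * T 1 2 + (b * T 0 0 - c * T 1 0 + a * T 3 0) * T 2 2 + (c * T 0 0 + b * T 1 0 - a * T 2 0) * T 3 2)*h12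
    norm_num at key


open scoped RealInnerProductSpace

namespace SDCircle

variable {V : Type} [NormedAddCommGroup V] [InnerProductSpace ℝ V]

lemma ortho_toMatrix (b c : OrthonormalBasis (Fin 4) ℝ V) :
    Matrix.transpose (b.toBasis.toMatrix c.toBasis) * (b.toBasis.toMatrix c.toBasis) = 1 := by
  ext i j
  have h := b.sum_inner_mul_inner (c i) (c j)
  have horth := orthonormal_iff_ite.mp c.orthonormal i j
  simp only [Matrix.mul_apply, Matrix.transpose_apply, Module.Basis.toMatrix_apply,
    OrthonormalBasis.coe_toBasis, OrthonormalBasis.coe_toBasis_repr_apply,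
    OrthonormalBasis.repr_apply_apply, Matrix.one_apply]
  rw [← horth, ← h]
  congr 1
  ext k
  rw [real_inner_comm (b k) (c i)]

lemma ortho_det_one (o : Orientation ℝ V (Fin 4)) (b c : OrthonormalBasis (Fin 4) ℝ V)
    (hbo : b.toBasis.orientation = o) (hco : c.toBasis.orientation = o) :
    (b.toBasis.toMatrix c.toBasis).det = 1 := by
  have h1 := ortho_toMatrix b c
  have h2 : ((b.toBasis.toMatrix c.toBasis).det)^2 = 1 := by
    have := congrArg Matrix.det h1
    simpa [Matrix.det_mul, Matrix.det_transpose, sq] using this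
  have h3 : 0 < b.toBasis.det c.toBasis := by
    rw [← Module.Basis.orientation_eq_iff_det_pos, hbo, hco]
  rw [Module.Basis.det_apply] at h3
  nlinarith [h2, h3]

lemma change_basis (b c : OrthonormalBasis (Fin 4) ℝ V) (φ : V →ₗ[ℝ] V) :
    LinearMap.toMatrix b.toBasis b.toBasis φ =
      (b.toBasis.toMatrix c.toBasis) * LinearMap.toMatrix c.toBasis c.toBasis φ *
        Matrix.transpose (b.toBasis.toMatrix c.toBasis) := by
  have hT := ortho_toMatrix b c
  have hflip : b.toBasis.toMatrix c.toBasis * c.toBasis.toMatrix b.toBasis = 1 :=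
    Module.Basis.toMatrix_mul_toMatrix_flip _ _
  have hTt : c.toBasis.toMatrix b.toBasis = Matrix.transpose (b.toBasis.toMatrix c.toBasis) := by
    calc c.toBasis.toMatrix b.toBasis
        = (Matrix.transpose (b.toBasis.toMatrix c.toBasis) * b.toBasis.toMatrix c.toBasis) *
            c.toBasis.toMatrix b.toBasis := by rw [hT, one_mul]
      _ = Matrix.transpose (b.toBasis.toMatrix c.toBasis) := by
          rw [mul_assoc, hflip, mul_one]
  have h1 : φ = (LinearMap.id.comp φ).comp LinearMap.id := by ext v; simp
  calc LinearMap.toMatrix b.toBasis b.toBasis φ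
      = LinearMap.toMatrix b.toBasis b.toBasis ((LinearMap.id.comp φ).comp LinearMap.id) := by
        rw [← h1]
    _ = LinearMap.toMatrix c.toBasis b.toBasis (LinearMap.id.comp φ) *
          LinearMap.toMatrix b.toBasis c.toBasis LinearMap.id := by
        rw [LinearMap.toMatrix_comp b.toBasis c.toBasis b.toBasis]
    _ = (LinearMap.toMatrix c.toBasis b.toBasis LinearMap.id *
          LinearMap.toMatrix c.toBasis c.toBasis φ) *
          LinearMap.toMatrix b.toBasis c.toBasis LinearMap.id := by
        rw [LinearMap.toMatrix_comp c.toBasis c.toBasis b.toBasis]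
    _ = _ := by
        rw [LinearMap.toMatrix_id_eq_basis_toMatrix, LinearMap.toMatrix_id_eq_basis_toMatrix, hTt]

lemma gram (b : OrthonormalBasis (Fin 4) ℝ V) (φ ψ : V →ₗ[ℝ] V) (i j : Fin 4) :
    (Matrix.transpose (LinearMap.toMatrix b.toBasis b.toBasis φ) *
      LinearMap.toMatrix b.toBasis b.toBasis ψ) i j = ⟪φ (b i), ψ (b j)⟫ := by
  simp only [Matrix.mul_apply, Matrix.transpose_apply, LinearMap.toMatrix_apply,
    OrthonormalBasis.coe_toBasis, OrthonormalBasis.coe_toBasis_repr_apply,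
    OrthonormalBasis.repr_apply_apply]
  rw [← b.sum_inner_mul_inner (φ (b i)) (ψ (b j))]
  congr 1
  ext k
  rw [real_inner_comm (b k) (φ (b i))]

lemma Lq_inj {a b c d a2 b2 c2 d2 : ℝ} (h : Lq a b c d = Lq a2 b2 c2 d2) :
    a = a2 ∧ b = b2 ∧ c = c2 ∧ d = d2 := by
  refine ⟨?_, ?_, ?_, ?_⟩
  · simpa [Lq] using congrArg (fun X : M4 => X 0 0) h
  · simpa [Lq] using congrArg (fun X : M4 => X 1 0) h
  · simpa [Lq] using congrArg (fun X : M4 => X 2 0) h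
  · simpa [Lq] using congrArg (fun X : M4 => X 3 0) h

lemma sd_matrix (o : Orientation ℝ V (Fin 4)) (b : OrthonormalBasis (Fin 4) ℝ V)
    (hbo : b.toBasis.orientation = o) (φ : V →ₗ[ℝ] V) (hφ : IsSDConf o φ) :
    ∃ p0 p1 p2 p3 : ℝ, LinearMap.toMatrix b.toBasis b.toBasis φ = Lq p0 p1 p2 p3 := by
  obtain ⟨r, θ, hr, c, hco, h0, h1, h2, h3⟩ := hφ
  have hc : LinearMap.toMatrix c.toBasis c.toBasis φ =
      Lq (r * Real.cos θ) (r * Real.sin θ) 0 0 := by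
    ext i j
    rw [LinearMap.toMatrix_apply]
    fin_cases i <;> fin_cases j <;>
      simp [h0, h1, h2, h3, OrthonormalBasis.coe_toBasis_repr_apply, OrthonormalBasis.repr_self,
        EuclideanSpace.single_apply, Lq, Matrix.vecHead, Matrix.vecTail]
  set T := b.toBasis.toMatrix c.toBasis with hTdef
  have hT := ortho_toMatrix b c
  have hTT : T * Matrix.transpose T = 1 := mul_eq_one_comm.mp hT
  have hdet := ortho_det_one o b c hbo hco
  obtain ⟨x, y, z, _, hK⟩ := core T hT hdet
  have hcb := change_basis b c φ
  rw [hc] at hcb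
  have hsplit : Lq (r * Real.cos θ) (r * Real.sin θ) 0 0 =
      (r * Real.cos θ) • (1 : M4) + (r * Real.sin θ) • Lq 0 1 0 0 := by
    rw [← Lq_one, Lq_smul_add]
    norm_num
  refine ⟨r * Real.cos θ, r * Real.sin θ * x, r * Real.sin θ * y, r * Real.sin θ * z, ?_⟩
  rw [hcb, hsplit]
  calc T * ((r * Real.cos θ) • (1 : M4) + (r * Real.sin θ) • Lq 0 1 0 0) * Matrix.transpose T
      = (r * Real.cos θ) • (T * Matrix.transpose T) +
        (r * Real.sin θ) • (T * Lq 0 1 0 0 * Matrix.transpose T) := by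
        rw [mul_add, add_mul]
        simp only [mul_smul_comm, smul_mul_assoc, mul_one]
    _ = (r * Real.cos θ) • Lq 1 0 0 0 + (r * Real.sin θ) • Lq 0 x y z := by
        rw [hTT, hK, Lq_one]
    _ = _ := by rw [Lq_smul_add]; norm_num

lemma exists_cos_sin (c s : ℝ) (h : c^2 + s^2 = 1) :
    ∃ θ : ℝ, Real.cos θ = c ∧ Real.sin θ = s := by
  have hc1 : -1 ≤ c := by nlinarith
  have hc2 : c ≤ 1 := by nlinarith
  have hsq : 1 - c^2 = s^2 := by linarith
  rcases le_or_gt 0 s with hs | hs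
  · exact ⟨Real.arccos c, Real.cos_arccos hc1 hc2, by
      rw [Real.sin_arccos, hsq, Real.sqrt_sq hs]⟩
  · refine ⟨-Real.arccos c, ?_, ?_⟩
    · rw [Real.cos_neg]; exact Real.cos_arccos hc1 hc2
    · rw [Real.sin_neg, Real.sin_arccos, hsq, Real.sqrt_sq_eq_abs, abs_of_neg hs, neg_neg]

end SDCircle


lemma SDCircle.sq4_zero {x0 x1 x2 x3 : ℝ} (h : x0^2+x1^2+x2^2+x3^2 = 0) :
    x0 = 0 ∧ x1 = 0 ∧ x2 = 0 ∧ x3 = 0 := by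
  refine ⟨?_, ?_, ?_, ?_⟩ <;>
    nlinarith [sq_nonneg x0, sq_nonneg x1, sq_nonneg x2, sq_nonneg x3]

lemma SDCircle.endgame (p0 p1 p2 p3 q0 q1 q2 q3 : ℝ)
    (hp : p0^2+p1^2+p2^2+p3^2 ≠ 0)
    (hm : p0^2+p1^2+p2^2+p3^2 = q0^2+q1^2+q2^2+q3^2)
    (hv1 : p0^2+p1^2-p2^2-p3^2 = q0^2+q1^2-q2^2-q3^2)
    (hv2 : 2*p1*p2 - 2*p0*p3 = 2*q1*q2 - 2*q0*q3)
    (hv3 : 2*p0*p2 + 2*p1*p3 = 2*q0*q2 + 2*q1*q3) :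
    ∃ c s : ℝ, c^2 + s^2 = 1 ∧ q0 = c*p0 - s*p1 ∧ q1 = c*p1 + s*p0 ∧
      q2 = c*p2 - s*p3 ∧ q3 = c*p3 + s*p2 := by
  set m2 := p0^2+p1^2+p2^2+p3^2 with hm2
  set u0 := p0*q0+p1*q1+p2*q2+p3*q3 with hu0
  set u1 := p0*q1-p1*q0+p2*q3-p3*q2 with hu1
  set u2 := p0*q2-p1*q3-p2*q0+p3*q1 with hu2d
  set u3 := p0*q3+p1*q2-p2*q1-p3*q0 with hu3d
  have h2 : 2*m2*u2 = 0 := by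
    linear_combination (-(-p0*q2 + p1*q3 - p2*q0 + p3*q1))*hv1 +
      (-(p0*q1 + p1*q0 + p2*q3 + p3*q2))*hv2 +
      (-(p0*q0 - p1*q1 - p2*q2 + p3*q3))*hv3 +
      (p0*q2 - p1*q3 - p2*q0 + p3*q1)*hm
  have h3 : -2*m2*u3 = 0 := by
    linear_combination (-(p0*q3 + p1*q2 + p2*q1 + p3*q0))*hv1 +
      (-(p0*q0 - p1*q1 + p2*q2 - p3*q3))*hv2 +
      (-(-p0*q1 - p1*q0 + p2*q3 + p3*q2))*hv3 +
      (-p0*q3 - p1*q2 + p2*q1 + p3*q0)*hm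
  have hu2 : u2 = 0 := by
    have := mul_eq_zero.mp h2
    rcases this with h | h
    · rcases mul_eq_zero.mp h with h' | h'
      · norm_num at h'
      · exact absurd h' hp
    · exact h
  have hu3 : u3 = 0 := by
    rcases mul_eq_zero.mp h3 with h | h
    · rcases mul_eq_zero.mp h with h' | h'
      · norm_num at h'
      · exact absurd h' hp
    · exact h
  have he : u0^2 + u1^2 = m2^2 := by
    linear_combination (-m2)*hm + (-u2)*hu2 + (-u3)*hu3
  refine ⟨u0/m2, u1/m2, ?_, ?_, ?_, ?_, ?_⟩
  · field_simp
    linear_combination he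
  · field_simp
    linear_combination p0*hu2d*0 + (-p2)*hu2 + (-p3)*hu3
  · field_simp
    linear_combination p3*hu2 + (-p2)*hu3
  · field_simp
    linear_combination p0*hu2 + p1*hu3
  · field_simp
    linear_combination (-p1)*hu2 + p0*hu3



set_option maxHeartbeats 1000000 in
/-- If two nonzero self-dual conformal transformations `φ, ψ` have the same pullback
form `φ*ω = ψ*ω` and the same pullback metric `φ*g = ψ*g`, then `ψ = e^{iθ}·φ` for
some angle `θ`, acting via the complex structure:
`ψ = (cos θ)·φ + (sin θ)·(J ∘ φ)`. -/
theorem sdconf_same_square_iff_circle {V : Type} [NormedAddCommGroup V]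
    [InnerProductSpace ℝ V] (o : Orientation ℝ V (Fin 4)) (J : V →ₗ[ℝ] V)
    (hJ : IsCompatibleCplx o J) (φ ψ : V →ₗ[ℝ] V)
    (hφ : IsSDConf o φ) (hψ : IsSDConf o ψ) (hφ0 : φ ≠ 0) (hψ0 : ψ ≠ 0)
    (hω : ∀ v w : V, ⟪J (φ v), φ w⟫ = ⟪J (ψ v), ψ w⟫)
    (hg : ∀ v w : V, ⟪φ v, φ w⟫ = ⟪ψ v, ψ w⟫) :
    ∃ θ : ℝ, ψ = Real.cos θ • φ + Real.sin θ • (J ∘ₗ φ) := by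
  classical
  obtain ⟨hJJ, hJin, b, hbo, hJ0, hJ2⟩ := hJ
  have hJ1 : J (b 1) = -(b 0) := by
    have := LinearMap.ext_iff.mp hJJ (b 0)
    simp only [LinearMap.comp_apply, LinearMap.neg_apply, LinearMap.id_apply] at this
    rw [hJ0] at this
    exact this
  have hJ3 : J (b 3) = -(b 2) := by
    have := LinearMap.ext_iff.mp hJJ (b 2)
    simp only [LinearMap.comp_apply, LinearMap.neg_apply, LinearMap.id_apply] at this
    rw [hJ2] at this
    exact this
  have hJmat : LinearMap.toMatrix b.toBasis b.toBasis J = Lq 0 1 0 0 := by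
    ext i j
    rw [LinearMap.toMatrix_apply]
    fin_cases i <;> fin_cases j <;>
      simp [hJ0, hJ1, hJ2, hJ3, OrthonormalBasis.coe_toBasis_repr_apply,
        OrthonormalBasis.repr_self, EuclideanSpace.single_apply, Lq,
        Matrix.vecHead, Matrix.vecTail]
  obtain ⟨p0, p1, p2, p3, hP⟩ := SDCircle.sd_matrix o b hbo φ hφ
  obtain ⟨q0, q1, q2, q3, hQ⟩ := SDCircle.sd_matrix o b hbo ψ hψ
  set P := LinearMap.toMatrix b.toBasis b.toBasis φ with hPdef
  set Q := LinearMap.toMatrix b.toBasis b.toBasis ψ with hQdef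
  -- metric hypothesis in matrix form
  have hgM : Matrix.transpose P * P = Matrix.transpose Q * Q := by
    ext i j
    rw [SDCircle.gram b φ φ i j, SDCircle.gram b ψ ψ i j]
    exact hg _ _
  -- form hypothesis in matrix form
  have hJφ : LinearMap.toMatrix b.toBasis b.toBasis (J ∘ₗ φ) = Lq 0 1 0 0 * P := by
    rw [LinearMap.toMatrix_comp b.toBasis b.toBasis b.toBasis, hJmat]
  have hJψ : LinearMap.toMatrix b.toBasis b.toBasis (J ∘ₗ ψ) = Lq 0 1 0 0 * Q := by
    rw [LinearMap.toMatrix_comp b.toBasis b.toBasis b.toBasis, hJmat]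
  have hωM : Matrix.transpose (Lq 0 1 0 0 * P) * P = Matrix.transpose (Lq 0 1 0 0 * Q) * Q := by
    ext i j
    rw [← hJφ, ← hJψ, SDCircle.gram b (J ∘ₗ φ) φ i j, SDCircle.gram b (J ∘ₗ ψ) ψ i j]
    simpa using hω (b i) (b j)
  rw [hP, hQ] at hgM hωM
  rw [Lq_transpose, Lq_transpose, Lq_mul, Lq_mul] at hgM
  rw [Matrix.transpose_mul, Matrix.transpose_mul, Lq_transpose, Lq_transpose, Lq_transpose,
    Lq_mul, Lq_mul, Lq_mul, Lq_mul] at hωM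
  obtain ⟨hg0, _, _, _⟩ := SDCircle.Lq_inj hgM
  obtain ⟨_, hw1, hw2, hw3⟩ := SDCircle.Lq_inj hωM
  -- nonvanishing of p
  have hnp : p0^2 + p1^2 + p2^2 + p3^2 ≠ 0 := by
    intro h
    obtain ⟨e0, e1, e2, e3⟩ := SDCircle.sq4_zero h
    apply hφ0
    apply (LinearMap.toMatrix b.toBasis b.toBasis).injective
    rw [← hPdef, hP, e0, e1, e2, e3, map_zero]
    ext i j
    fin_cases i <;> fin_cases j <;>
      simp [Lq, Matrix.vecHead, Matrix.vecTail]
  obtain ⟨c, s, hcs, he0, he1, he2, he3⟩ :=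
    SDCircle.endgame p0 p1 p2 p3 q0 q1 q2 q3 hnp
      (by linear_combination hg0)
      (by linear_combination -hw1) (by linear_combination -hw2) (by linear_combination -hw3)
  obtain ⟨θ, hθc, hθs⟩ := SDCircle.exists_cos_sin c s hcs
  refine ⟨θ, ?_⟩
  apply (LinearMap.toMatrix b.toBasis b.toBasis).injective
  rw [map_add, map_smul, map_smul, ← hQdef, ← hPdef, hJφ, hQ, hP, hθc, hθs, Lq_mul]
  rw [Lq_smul_add]
  rw [he0, he1, he2, he3]
  congr 1 <;> ring
end

section
/- Let V be a 4-dimensional oriented inner product space identified with ℍ, with complex structure right multiplication by i. The map σ sending a quaternion q (viewed as the self-dual conformal transformation Rq) to ¼(Rq)*ω, where ω is the fundamental form, satisfies |σ(q)| = (√2/4)·|q|²; in particular σ(q) = 0 if and only if q = 0. -/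
open scoped RealInnerProductSpace Quaternion

def qi : ℍ[ℝ] := ⟨0, 1, 0, 0⟩
def qj : ℍ[ℝ] := ⟨0, 0, 1, 0⟩
def qk : ℍ[ℝ] := ⟨0, 0, 0, 1⟩

/-- The standard orthonormal basis `1, i, j, k` of ℍ ≅ ℝ⁴. -/
noncomputable def quatBasis : Fin 4 → ℍ[ℝ] := ![1, qi, qj, qk]

lemma squaring_sum (q : ℍ[ℝ]) : (∑ a : Fin 4, ∑ b : Fin 4,
        ((1 / 4 : ℝ) * ⟪quatBasis a * q * qi, quatBasis b * q⟫) ^ 2) =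
      (Quaternion.normSq q)^2 / 4 := by
  simp [Fin.sum_univ_four, quatBasis, Quaternion.inner_def,
    Quaternion.normSq_def', Quaternion.re_mul, Quaternion.imI_mul, Quaternion.imJ_mul,
    Quaternion.imK_mul]
  simp [qi, qj, qk]
  ring

/-- For the self-dual spinor given by right multiplication `Rq` on ℍ ≅ ℝ⁴, the squaring
map `σ(q) = ¼ (Rq)*ω` (with `ω(v,w) = ⟪vi, w⟫`) satisfies `|σ(q)| = (√2/4)·|q|²`;
in particular `σ(q) = 0` if and only if `q = 0`. -/
theorem squaring_map_norm (q : ℍ[ℝ]) :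
    Real.sqrt ((1 / 2) * ∑ a : Fin 4, ∑ b : Fin 4,
        ((1 / 4 : ℝ) * ⟪quatBasis a * q * qi, quatBasis b * q⟫) ^ 2) =
      (Real.sqrt 2 / 4) * ‖q‖ ^ 2 ∧
    ((∀ v w : ℍ[ℝ], (1 / 4 : ℝ) * ⟪v * q * qi, w * q⟫ = 0) ↔ q = 0) := by
  constructor
  · rw [squaring_sum]
    have hn : Quaternion.normSq q = ‖q‖ ^ 2 := by
      rw [sq]; exact Quaternion.normSq_eq_norm_mul_self q
    rw [hn]
    have h2 : (0:ℝ) ≤ Real.sqrt 2 / 4 * ‖q‖ ^ 2 := by positivity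
    rw [show (1/2 : ℝ) * ((‖q‖^2)^2 / 4) = (Real.sqrt 2 / 4 * ‖q‖ ^ 2)^2 by
      rw [mul_pow, div_pow, Real.sq_sqrt (by norm_num)]; ring]
    exact Real.sqrt_sq h2
  · constructor
    · intro h
      by_contra hq
      have := h 1 (q * qi * q⁻¹)
      rw [one_mul, mul_assoc, inv_mul_cancel₀ hq, mul_one] at this
      have h0 : (⟪q * qi, q * qi⟫ : ℝ) = 0 := by linarith
      rw [Quaternion.inner_self] at h0
      have : q * qi = 0 := by exact_mod_cast Quaternion.normSq_eq_zero.mp (by exact_mod_cast h0)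
      have hqi : qi ≠ 0 := by
        intro h'
        have := congrArg QuaternionAlgebra.imI h'
        simp [qi] at this
      exact hq ((mul_eq_zero.mp this).resolve_right hqi)
    · intro h v w; simp [h, Quaternion.inner_def]
end

section
/- Let V be a 4-dimensional oriented real inner product space with compatible complex structure J. For a self-dual conformal transformation φ of V and any tangent vector v, |φ(v)| = r·|v| where r² is the conformal factor of φ; combined with σ(φ) = ¼φ*ω, this yields |σ(φ)| = (√2/4)|φ|²_{op,conf} — i.e., the pointwise Seiberg–Witten identity |σ(φ)| = (√2/4)|φ|² where |φ|² denotes the conformal factor (squared spinor norm). -/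
open scoped RealInnerProductSpace

/-- For a self-dual conformal transformation `φ` with conformal factor `r²`,
`‖φ(v)‖ = r‖v‖` for all `v`, and the squaring map `σ(φ) = ¼ φ*ω` (here `ω(v,w) =
⟪Jv,w⟫`, and norms of 2-forms computed in any orthonormal basis) satisfies the
pointwise Seiberg–Witten identity `|σ(φ)| = (√2/4)·|φ|²`, where `|φ|² = r²` is the
conformal factor (squared spinor norm). -/
theorem sdconf_squaring_identity {V : Type} [NormedAddCommGroup V]
    [InnerProductSpace ℝ V] (o : Orientation ℝ V (Fin 4)) (J φ : V →ₗ[ℝ] V)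
    (hJ : IsCompatibleCplx o J) (r θ : ℝ) (h : IsSDConfWith o φ r θ) :
    (∀ v : V, ‖φ v‖ = r * ‖v‖) ∧
    ∀ b : OrthonormalBasis (Fin 4) ℝ V,
      Real.sqrt ((1 / 2) * ∑ a : Fin 4, ∑ c : Fin 4,
          ((1 / 4 : ℝ) * ⟪J (φ (b a)), φ (b c)⟫) ^ 2) =
        (Real.sqrt 2 / 4) * r ^ 2 := by
  obtain ⟨hr, b₀, -, h0, h1, h2, h3⟩ := h
  have hon := b₀.orthonormal
  have hite : ∀ i j : Fin 4, ⟪b₀ i, b₀ j⟫ = if i = j then (1 : ℝ) else 0 :=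
    orthonormal_iff_ite.mp hon
  have hone : ∀ i j : Fin 4, ⟪φ (b₀ i), φ (b₀ j)⟫ = r ^ 2 * ⟪b₀ i, b₀ j⟫ := by
    have e4 : ∀ k : Fin 4, k = 0 ∨ k = 1 ∨ k = 2 ∨ k = 3 := by decide
    intro i j
    rcases e4 i with rfl | rfl | rfl | rfl <;> rcases e4 j with rfl | rfl | rfl | rfl <;>
      simp only [h0, h1, h2, h3, inner_smul_left, inner_smul_right, inner_add_left,
        inner_add_right, hite, conj_trivial] <;>
      (try simp) <;> (first | tauto | ring1 | (right; ring1) | linear_combination (r ^ 2) * Real.sin_sq_add_cos_sq θ)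
  have key : ∀ v w : V, ⟪φ v, φ w⟫ = r ^ 2 * ⟪v, w⟫ := by
    intro v w
    rw [← b₀.sum_repr v, ← b₀.sum_repr w]
    simp only [map_sum, map_smul, sum_inner, inner_sum, real_inner_smul_left,
      real_inner_smul_right]
    simp only [hone]
    rw [Finset.mul_sum]
    refine Finset.sum_congr rfl fun i _ => ?_
    rw [Finset.mul_sum]
    refine Finset.sum_congr rfl fun j _ => ?_
    ring
  have hnorm : ∀ v : V, ‖φ v‖ = r * ‖v‖ := by
    intro v
    have h2 : ‖φ v‖ ^ 2 = (r * ‖v‖) ^ 2 := by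
      rw [← real_inner_self_eq_norm_sq, key v v, real_inner_self_eq_norm_sq]; ring
    calc ‖φ v‖ = Real.sqrt (‖φ v‖ ^ 2) := (Real.sqrt_sq (norm_nonneg _)).symm
      _ = Real.sqrt ((r * ‖v‖) ^ 2) := by rw [h2]
      _ = r * ‖v‖ := Real.sqrt_sq (mul_nonneg hr (norm_nonneg _))
  refine ⟨hnorm, fun b => ?_⟩
  have hJn : ∀ v : V, ‖J v‖ = ‖v‖ := by
    intro v
    have := hJ.2.1 v v
    rw [real_inner_self_eq_norm_sq, real_inner_self_eq_norm_sq] at this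
    calc ‖J v‖ = Real.sqrt (‖J v‖ ^ 2) := (Real.sqrt_sq (norm_nonneg _)).symm
      _ = Real.sqrt (‖v‖ ^ 2) := by rw [this]
      _ = ‖v‖ := Real.sqrt_sq (norm_nonneg _)
  -- Parseval-type sum over the image basis
  have hsum : ∀ u : V, ∑ c : Fin 4, ⟪u, φ (b c)⟫ ^ 2 = r ^ 2 * ‖u‖ ^ 2 := by
    intro u
    rcases eq_or_lt_of_le hr with hr0 | hr0
    · have hz : ∀ c : Fin 4, φ (b c) = 0 := by
        intro c
        have := hnorm (b c)
        rw [← hr0, zero_mul] at this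
        exact norm_eq_zero.mp this
      simp [hz, ← hr0]
    · have hcon : Orthonormal ℝ (fun i : Fin 4 => r⁻¹ • φ (b i)) := by
        rw [orthonormal_iff_ite]
        intro i j
        simp only [real_inner_smul_left, real_inner_smul_right, key, hite,
          orthonormal_iff_ite.mp b.orthonormal]
        rcases eq_or_ne i j with rfl | hij
        · simp; field_simp
        · simp [hij]
      haveI : FiniteDimensional ℝ V := Module.Finite.of_basis b.toBasis
      have hcard : Fintype.card (Fin 4) = Module.finrank ℝ V := by
        rw [Module.finrank_eq_card_basis b.toBasis]
      have hspan : ⊤ ≤ Submodule.span ℝ (Set.range fun i : Fin 4 => r⁻¹ • φ (b i)) :=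
        (hcon.linearIndependent.span_eq_top_of_card_eq_finrank hcard).ge
      let C : OrthonormalBasis (Fin 4) ℝ V := OrthonormalBasis.mk hcon hspan
      have hC : ∀ i, C i = r⁻¹ • φ (b i) := fun i => OrthonormalBasis.coe_mk hcon hspan ▸ rfl
      have hpar := C.sum_inner_mul_inner u u
      have : ∑ c : Fin 4, ⟪u, φ (b c)⟫ ^ 2 = r ^ 2 * ∑ c : Fin 4, ⟪u, C c⟫ * ⟪C c, u⟫ := by
        rw [Finset.mul_sum]
        refine Finset.sum_congr rfl fun c _ => ?_
        have hrne : r ≠ 0 := ne_of_gt hr0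
        rw [hC c]
        simp only [real_inner_smul_left, real_inner_smul_right]
        rw [real_inner_comm (φ (b c)) u]
        field_simp
      rw [this, hpar, real_inner_self_eq_norm_sq]
  have hInner : ∀ a : Fin 4,
      ∑ c : Fin 4, ((1 / 4 : ℝ) * ⟪J (φ (b a)), φ (b c)⟫) ^ 2 = (1 / 16) * r ^ 4 := by
    intro a
    have : ∑ c : Fin 4, ((1 / 4 : ℝ) * ⟪J (φ (b a)), φ (b c)⟫) ^ 2
        = (1 / 16) * ∑ c : Fin 4, ⟪J (φ (b a)), φ (b c)⟫ ^ 2 := by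
      rw [Finset.mul_sum]; exact Finset.sum_congr rfl fun c _ => by ring
    rw [this, hsum, hJn, hnorm, b.orthonormal.1 a]
    ring
  have htot : ((1 : ℝ) / 2) * ∑ a : Fin 4, ∑ c : Fin 4,
      ((1 / 4 : ℝ) * ⟪J (φ (b a)), φ (b c)⟫) ^ 2 = r ^ 4 / 8 := by
    simp only [hInner, Finset.sum_const, Finset.card_univ, Fintype.card_fin, nsmul_eq_mul]
    ring
  rw [htot]
  have : r ^ 4 / 8 = (Real.sqrt 2 / 4 * r ^ 2) ^ 2 := by
    rw [mul_pow, div_pow, Real.sq_sqrt (by norm_num : (2:ℝ) ≥ 0)]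
    ring
  rw [this, Real.sqrt_sq (by positivity)]
end
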